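/- Let G = ⟨a, b ∣ a b a⁻¹ b = 1⟩ be the Klein bottle group (the fundamental group of the Klein bottle). Then r(G) ≤ 1 and rank(G) = 2; in particular r(G) < rank(G). -/

import Mathlib

open scoped Pointwise

/-- `algA G i` is the set of elements of `G` whose centralizer contains a
free abelian subgroup of rank at most `i` as a subgroup of finite index. -/
def algA (G : Type*) [Group G] (i : ℕ) : Set G :=
  {g : G | ∃ H : Subgroup (Subgroup.centralizer ({g} : Set G)),
    H.FiniteIndex ∧ ∃ n : ℕ, n ≤ i ∧ Nonempty (H ≃* Multiplicative (Fin n → ℤ))}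

/-- `G` is covered by finitely many left translates of `algA G i`. -/
def algCovers (G : Type*) [Group G] (i : ℕ) : Prop :=
  ∃ F : Finset G, (⋃ g ∈ F, g • algA G i) = Set.univ

/-- `r(G)`: the least `i` such that `G` is a finite union of translates of `algA G i`
(`⊤` if there is no such `i`). -/
noncomputable def algr (G : Type*) [Group G] : ℕ∞ :=
  sInf {n : ℕ∞ | ∃ i : ℕ, n = (i : ℕ∞) ∧ algCovers G i}

/-- The algebraic rank of `G`: the supremum of `r(G*)` over all finite index
subgroups `G*` of `G`. -/
noncomputable def algRank (G : Type*) [Group G] : ℕ∞ :=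
  ⨆ (H : Subgroup G) (_ : H.FiniteIndex), algr H

/-- The Klein bottle group `⟨a, b ∣ a b a⁻¹ b = 1⟩`, presented with two generators
(`0` playing the role of `a` and `1` that of `b`) and the single relator `a b a⁻¹ b`. -/
def kleinBottleRels : Set (FreeGroup (Fin 2)) :=
  {FreeGroup.of 0 * FreeGroup.of 1 * (FreeGroup.of 0)⁻¹ * FreeGroup.of 1}

/-- The Klein bottle group. -/
def KleinBottleGroup : Type := PresentedGroup kleinBottleRels

instance : Group KleinBottleGroup :=
  inferInstanceAs (Group (PresentedGroup kleinBottleRels))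

/-!
Write the Klein bottle group as `ℤ ⋊ ℤ`, the generator `a` of the right factor acting on the
generator `b` of the left factor by inversion. If `g` has odd `a`-exponent, an element of its
centralizer with trivial `a`-exponent is inverted by `g`, hence trivial; so the centralizer embeds
in `ℤ` and `g ∈ A₁`. Every element is `1` or `a` times such a `g`, whence `r ≤ 1`.

The elements of even `a`-exponent form an index-two subgroup `B ≅ ℤ²`. For a finite-index subgroup
`H`, the centralizers in `H` contain the finite-index subgroups `B ∩ centralizer`, which embed in
`ℤ²` and are therefore free abelian of rank at most two, so `rank ≤ 2`. Conversely `r(B) = 2`: a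
finite-index subgroup of `ℤ²` contains the image of a power map, which embeds `ℤ²` into it.
-/

open Multiplicative

theorem exists_mulEquiv_pi_of_injective {M A : Type*} [AddCommGroup M] [IsAddTorsionFree M]
    [Module.Finite ℤ M] [Group A] {f : A →* Multiplicative M} (hf : Function.Injective f) :
    ∃ n ≤ Module.finrank ℤ M, Nonempty (A ≃* Multiplicative (Fin n → ℤ)) := by
  set S : Submodule ℤ M := (MonoidHom.toAdditiveLeft f).range.toIntSubmodule
  have : Module.Free ℤ S := Module.free_of_finite_type_torsion_free'
  refine ⟨Module.finrank ℤ S, S.finrank_le, ⟨AddEquiv.toMultiplicativeRight ?_⟩⟩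
  exact (AddMonoidHom.ofInjective hf).trans (Module.finBasis ℤ S).equivFun.toAddEquiv

theorem finrank_le_finrank_of_injective_monoidHom {M N : Type*} [AddCommGroup M]
    [AddCommGroup N] [Module.Finite ℤ N] {f : Multiplicative M →* Multiplicative N}
    (hf : Function.Injective f) : Module.finrank ℤ M ≤ Module.finrank ℤ N :=
  LinearMap.finrank_le_finrank_of_injective
    (f := (AddMonoidHom.toMultiplicative.symm f).toIntLinearMap) hf

theorem MonoidHom.subgroupComap_injective {G G' : Type*} [Group G] [Group G'] {f : G →* G'}
    (hf : Function.Injective f) (H' : Subgroup G') : Function.Injective (f.subgroupComap H') :=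
  fun _ _ h => Subtype.ext (hf (congrArg Subtype.val h))

theorem Subgroup.exists_injective_hom_of_finiteIndex {G : Type*} [CommGroup G]
    [IsMulTorsionFree G] (H : Subgroup G) [H.FiniteIndex] : ∃ f : G →* H, Function.Injective f :=
  ⟨(powMonoidHom H.index).codRestrict H H.pow_index_mem,
    (MonoidHom.injective_codRestrict _ _ _).2 <|
      IsMulTorsionFree.pow_left_injective Subgroup.FiniteIndex.index_ne_zero⟩

theorem Subgroup.finiteIndex_map_mulEquiv {G G' : Type*} [Group G] [Group G'] (e : G ≃* G')
    (H : Subgroup G) [H.FiniteIndex] : (H.map (e : G →* G')).FiniteIndex :=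
  ⟨by rw [Subgroup.index_map_equiv]; exact Subgroup.FiniteIndex.index_ne_zero⟩

theorem zpow_smul_eq_ite_of_sq_smul {α β : Type*} [Group α] [MulAction α β] {σ : α} {x : β}
    (h : σ ^ 2 • x = x) (m : ℤ) : σ ^ m • x = if Even m then x else σ • x := by
  have hk : ∀ k : ℤ, (σ ^ 2) ^ k ∈ MulAction.stabilizer α x := fun k =>
    Subgroup.zpow_mem _ (MulAction.mem_stabilizer_iff.2 h) k
  obtain ⟨k, rfl | rfl⟩ := Int.even_or_odd' m
  · rw [if_pos (even_two_mul k), zpow_mul, zpow_ofNat]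
    exact MulAction.mem_stabilizer_iff.1 (hk k)
  · rw [if_neg (Int.not_even_iff_odd.2 (odd_two_mul_add_one k)), add_comm, zpow_one_add,
      mul_smul, zpow_mul, zpow_ofNat, MulAction.mem_stabilizer_iff.1 (hk k)]

section AlgebraicRank

variable {G G' : Type*} [Group G] [Group G']

theorem mem_algA_of_injective {M : Type*} [AddCommGroup M] [IsAddTorsionFree M]
    [Module.Finite ℤ M] {g : G} (H : Subgroup (Subgroup.centralizer ({g} : Set G)))
    [hH : H.FiniteIndex] {f : H →* Multiplicative M} (hf : Function.Injective f) :
    g ∈ algA G (Module.finrank ℤ M) :=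
  ⟨H, hH, exists_mulEquiv_pi_of_injective hf⟩

theorem algA_eq_univ_of_injective {M : Type*} [AddCommGroup M] [IsAddTorsionFree M]
    [Module.Finite ℤ M] (B : Subgroup G) [B.FiniteIndex] {f : B →* Multiplicative M}
    (hf : Function.Injective f) : algA G (Module.finrank ℤ M) = Set.univ :=
  Set.eq_univ_of_forall fun _ => mem_algA_of_injective (B.subgroupOf _)
    (f := f.comp ((Subgroup.subtype _).subgroupComap B))
    (hf.comp (MonoidHom.subgroupComap_injective Subtype.val_injective B))

theorem algA_eq_empty_of_lt_finrank {M : Type*} [AddCommGroup M] [IsAddTorsionFree M] {i : ℕ}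
    (hi : i < Module.finrank ℤ M) : algA (Multiplicative M) i = ∅ := by
  refine Set.eq_empty_of_forall_notMem ?_
  rintro g ⟨H, hH, n, hn, ⟨e⟩⟩
  refine hi.not_ge ?_
  let toCentralizer : Multiplicative M →* Subgroup.centralizer {g} :=
    (MonoidHom.id _).codRestrict _ fun x => Subgroup.mem_centralizer_singleton_iff.2 (mul_comm x g)
  have hto : Function.Injective toCentralizer := fun _ _ h => congrArg Subtype.val h
  obtain ⟨p, hp⟩ := H.exists_injective_hom_of_finiteIndex
  calc Module.finrank ℤ M ≤ Module.finrank ℤ (Fin n → ℤ) :=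
        finrank_le_finrank_of_injective_monoidHom (f := e.toMonoidHom.comp (p.comp toCentralizer))
          (e.injective.comp (hp.comp hto))
    _ = n := Module.finrank_fin_fun ℤ
    _ ≤ i := hn

theorem algA_nonempty_of_algCovers {i : ℕ} (h : algCovers G i) : (algA G i).Nonempty := by
  obtain ⟨F, hF⟩ := h
  obtain ⟨g, -, x, hx, -⟩ := Set.mem_iUnion₂.1 (hF ▸ Set.mem_univ (1 : G))
  exact ⟨x, hx⟩

theorem algCovers_of_algA_eq_univ {i : ℕ} (h : algA G i = Set.univ) : algCovers G i :=
  ⟨{1}, by simp [h]⟩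

theorem algr_le_of_algCovers {i : ℕ} (h : algCovers G i) : algr G ≤ i :=
  sInf_le ⟨i, rfl, h⟩

theorem algr_le_of_injective {M : Type*} [AddCommGroup M] [IsAddTorsionFree M]
    [Module.Finite ℤ M] (B : Subgroup G) [B.FiniteIndex] {f : B →* Multiplicative M}
    (hf : Function.Injective f) : algr G ≤ Module.finrank ℤ M :=
  algr_le_of_algCovers (algCovers_of_algA_eq_univ (algA_eq_univ_of_injective B hf))

theorem algr_multiplicative (M : Type*) [AddCommGroup M] [IsAddTorsionFree M]
    [Module.Finite ℤ M] : algr (Multiplicative M) = Module.finrank ℤ M := by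
  refine le_antisymm (algr_le_of_injective ⊤ (f := Subgroup.subtype ⊤) Subtype.val_injective)
    (le_sInf ?_)
  rintro _ ⟨i, rfl, hi⟩
  by_contra! hlt
  have hempty := algA_eq_empty_of_lt_finrank (M := M) (by exact_mod_cast hlt)
  exact (hempty ▸ algA_nonempty_of_algCovers hi).ne_empty rfl

theorem algr_le_algRank (H : Subgroup G) [hH : H.FiniteIndex] : algr H ≤ algRank G :=
  le_iSup₂ (f := fun (H : Subgroup G) (_ : H.FiniteIndex) => algr H) H hH

theorem algRank_le_of_injective {M : Type*} [AddCommGroup M] [IsAddTorsionFree M]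
    [Module.Finite ℤ M] (B : Subgroup G) [B.FiniteIndex] {f : B →* Multiplicative M}
    (hf : Function.Injective f) : algRank G ≤ Module.finrank ℤ M :=
  iSup₂_le fun H _ => algr_le_of_injective (B.subgroupOf H)
    (f := f.comp (H.subtype.subgroupComap B))
    (hf.comp (MonoidHom.subgroupComap_injective Subtype.val_injective B))

theorem map_mem_algA (e : G ≃* G') {i : ℕ} {g : G} (hg : g ∈ algA G i) : e g ∈ algA G' i := by
  obtain ⟨H, hH, n, hn, ⟨ι⟩⟩ := hg
  have hC : (Subgroup.centralizer {g}).map (e : G →* G') = Subgroup.centralizer {e g} := by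
    ext x
    simp only [Subgroup.mem_map, Subgroup.mem_centralizer_singleton_iff]
    refine ⟨?_, fun hx => ⟨e.symm x, e.injective ?_, e.apply_symm_apply x⟩⟩
    · rintro ⟨y, hy, rfl⟩
      simp [← map_mul, hy]
    · simpa using hx
  let φ := (e.subgroupMap _).trans (MulEquiv.subgroupCongr hC)
  exact ⟨H.map (φ : _ →* _), Subgroup.finiteIndex_map_mulEquiv φ H, n, hn,
    ⟨(φ.subgroupMap H).symm.trans ι⟩⟩

theorem algCovers_of_mulEquiv (e : G ≃* G') {i : ℕ} (h : algCovers G i) : algCovers G' i := by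
  classical
  obtain ⟨F, hF⟩ := h
  refine ⟨F.image e, Set.eq_univ_of_forall fun x => ?_⟩
  obtain ⟨g, hg, y, hy, hgy⟩ := Set.mem_iUnion₂.1 (hF ▸ Set.mem_univ (e.symm x))
  refine Set.mem_iUnion₂.2 ⟨e g, Finset.mem_image_of_mem e hg, e y, map_mem_algA e hy, ?_⟩
  simpa [← map_mul] using congrArg e hgy

theorem algr_congr (e : G ≃* G') : algr G = algr G' := by
  simp only [algr]
  congr 1
  ext n
  exact exists_congr fun i => and_congr_right fun _ =>
    ⟨algCovers_of_mulEquiv e, algCovers_of_mulEquiv e.symm⟩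

theorem algRank_le_of_mulEquiv (e : G ≃* G') : algRank G ≤ algRank G' :=
  iSup₂_le fun H _ =>
    have := Subgroup.finiteIndex_map_mulEquiv e H
    (algr_congr (e.subgroupMap H)).le.trans (algr_le_algRank _)

theorem algRank_congr (e : G ≃* G') : algRank G = algRank G' :=
  (algRank_le_of_mulEquiv e).antisymm (algRank_le_of_mulEquiv e.symm)

end AlgebraicRank

namespace KleinBottleGroup

def negPow : Multiplicative ℤ →* MulAut (Multiplicative ℤ) :=
  zpowersHom _ (MulEquiv.inv _)

theorem negPow_apply (m z : Multiplicative ℤ) :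
    negPow m z = if Even (toAdd m) then z else z⁻¹ :=
  zpow_smul_eq_ite_of_sq_smul (σ := MulEquiv.inv (Multiplicative ℤ)) (x := z)
    (by rw [sq, mul_smul]; simp [MulAut.smul_def]) (toAdd m)

abbrev Model : Type := Multiplicative ℤ ⋊[negPow] Multiplicative ℤ

def a : KleinBottleGroup := PresentedGroup.of 0

def b : KleinBottleGroup := PresentedGroup.of 1

theorem a_mul_b_mul_a_inv : a * b * a⁻¹ = b⁻¹ :=
  mul_eq_one_iff_eq_inv.1 (PresentedGroup.one_of_mem rfl)

theorem conj_zpow_a_b (m : ℤ) : MulAut.conj (a ^ m) b = if Even m then b else b⁻¹ := by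
  have hb : MulAut.conj a • b = b⁻¹ := a_mul_b_mul_a_inv
  rw [map_zpow, ← MulAut.smul_def, zpow_smul_eq_ite_of_sq_smul _ m, hb]
  rw [sq, mul_smul, hb, MulAut.smul_def, map_inv, ← MulAut.smul_def, hb, inv_inv]

def toModel : KleinBottleGroup →* Model :=
  PresentedGroup.toGroup (f := ![SemidirectProduct.inr (ofAdd 1), SemidirectProduct.inl (ofAdd 1)])
    (by rintro _ rfl; ext <;> simp [negPow_apply])

def ofModel : Model →* KleinBottleGroup :=
  SemidirectProduct.lift (zpowersHom _ b) (zpowersHom _ a) fun g => MonoidHom.ext_mint <| by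
    change b ^ toAdd (negPow g (ofAdd 1)) = MulAut.conj (a ^ toAdd g) (b ^ toAdd (ofAdd (1 : ℤ)))
    rw [negPow_apply, toAdd_ofAdd, zpow_one, conj_zpow_a_b]
    split_ifs <;> simp

theorem toModel_a : toModel a = SemidirectProduct.inr (ofAdd 1) := PresentedGroup.toGroup.of _

theorem toModel_b : toModel b = SemidirectProduct.inl (ofAdd 1) := PresentedGroup.toGroup.of _

theorem ofModel_inl (n : ℤ) : ofModel (SemidirectProduct.inl (ofAdd n)) = b ^ n :=
  SemidirectProduct.lift_inl _ _ _ _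

theorem ofModel_inr (n : ℤ) : ofModel (SemidirectProduct.inr (ofAdd n)) = a ^ n :=
  SemidirectProduct.lift_inr _ _ _ _

theorem ofModel_comp_toModel : ofModel.comp toModel = MonoidHom.id _ :=
  PresentedGroup.ext fun i => by
    fin_cases i
    · exact (congrArg ofModel toModel_a).trans ((ofModel_inr 1).trans (zpow_one a))
    · exact (congrArg ofModel toModel_b).trans ((ofModel_inl 1).trans (zpow_one b))

theorem toModel_comp_ofModel : toModel.comp ofModel = MonoidHom.id _ :=
  SemidirectProduct.hom_ext
    (MonoidHom.ext_mint (by simp [ofModel_inl, toModel_b]))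
    (MonoidHom.ext_mint (by simp [ofModel_inr, toModel_a]))

def mulEquivModel : KleinBottleGroup ≃* Model :=
  MonoidHom.toMulEquiv toModel ofModel ofModel_comp_toModel toModel_comp_ofModel

namespace Model

theorem mem_algA_one_of_odd {g : Model} (hg : Odd (toAdd g.right)) : g ∈ algA Model 1 := by
  let f : Subgroup.centralizer {g} →* Multiplicative ℤ :=
    SemidirectProduct.rightHom.comp (Subgroup.subtype _)
  have hf : Function.Injective f := by
    refine (injective_iff_map_eq_one f).2 fun ⟨x, hx⟩ hright => ?_
    replace hright : x.right = 1 := hright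
    have hleft := congrArg (toAdd ∘ SemidirectProduct.left)
      (Subgroup.mem_centralizer_singleton_iff.1 hx)
    simp only [Function.comp_apply, SemidirectProduct.mul_left, hright, map_one, MulAut.one_apply,
      toAdd_mul, negPow_apply, Int.not_even_iff_odd.2 hg, ↓reduceIte, toAdd_inv] at hleft
    exact Subtype.ext
      (SemidirectProduct.ext (toAdd_eq_zero.1 (show toAdd x.left = 0 by omega)) hright)
  simpa using mem_algA_of_injective (M := ℤ) ⊤ (f := f.comp (Subgroup.subtype ⊤))
    (hf.comp Subtype.val_injective)

theorem algr_le_one : algr Model ≤ 1 := by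
  classical
  refine algr_le_of_algCovers ⟨{1, SemidirectProduct.inr (ofAdd 1)},
    Set.eq_univ_of_forall fun z => Set.mem_iUnion₂.2 ?_⟩
  rcases Int.even_or_odd (toAdd z.right) with he | ho
  · refine ⟨SemidirectProduct.inr (ofAdd 1), by simp,
      Set.mem_smul_set_iff_inv_smul_mem.2 (mem_algA_one_of_odd ?_)⟩
    simpa [smul_eq_mul] using (odd_neg_one (α := ℤ)).add_even he
  · exact ⟨1, by simp, by simpa using mem_algA_one_of_odd ho⟩

def parity : Model →* Multiplicative (ZMod 2) :=
  (Int.castAddHom (ZMod 2)).toMultiplicative.comp SemidirectProduct.rightHom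

theorem mem_ker_parity {z : Model} : z ∈ parity.ker ↔ Even (toAdd z.right) :=
  ZMod.intCast_eq_zero_iff_even

def evenEmbedding : Multiplicative (ℤ × ℤ) →* Model where
  toFun w := ⟨ofAdd (toAdd w).1, ofAdd (2 * (toAdd w).2)⟩
  map_one' := rfl
  map_mul' v w := by
    refine SemidirectProduct.ext ?_ ?_
    · change ofAdd (toAdd (v * w)).1 =
        ofAdd (toAdd v).1 * negPow (ofAdd (2 * (toAdd v).2)) (ofAdd (toAdd w).1)
      rw [negPow_apply, toAdd_ofAdd, if_pos (even_two_mul _)]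
      rfl
    · rw [SemidirectProduct.mul_right, ← ofAdd_add, toAdd_mul, Prod.snd_add, mul_add]

theorem evenEmbedding_injective : Function.Injective evenEmbedding := by
  intro v w h
  have h1 : (toAdd v).1 = (toAdd w).1 := congrArg (toAdd ∘ SemidirectProduct.left) h
  have h2 : 2 * (toAdd v).2 = 2 * (toAdd w).2 := congrArg (toAdd ∘ SemidirectProduct.right) h
  exact toAdd.injective (Prod.ext h1 (by omega))

theorem range_evenEmbedding : evenEmbedding.range = parity.ker := by
  ext z
  rw [mem_ker_parity, MonoidHom.mem_range]
  constructor
  · rintro ⟨w, rfl⟩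
    exact ⟨(toAdd w).2, two_mul _⟩
  · rintro ⟨k, hk⟩
    refine ⟨ofAdd (toAdd z.left, k), SemidirectProduct.ext rfl ?_⟩
    change ofAdd (2 * k) = z.right
    rw [two_mul, ← hk, ofAdd_toAdd]

noncomputable def kerParityMulEquiv : parity.ker ≃* Multiplicative (ℤ × ℤ) :=
  ((MonoidHom.ofInjective evenEmbedding_injective).trans
    (MulEquiv.subgroupCongr range_evenEmbedding)).symm

theorem algRank_eq_two : algRank Model = 2 := by
  have h2 : Module.finrank ℤ (ℤ × ℤ) = 2 := by simp
  refine le_antisymm ?_ ?_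
  · simpa [h2] using algRank_le_of_injective parity.ker (f := kerParityMulEquiv.toMonoidHom)
      kerParityMulEquiv.injective
  · calc (2 : ℕ∞) = algr parity.ker := by
          rw [algr_congr kerParityMulEquiv, algr_multiplicative, h2]; rfl
      _ ≤ algRank Model := algr_le_algRank _

end Model

end KleinBottleGroup

/-- For the Klein bottle group `G`, `r(G) ≤ 1` and `rank(G) = 2`;
in particular `r(G) < rank(G)`. -/
theorem stmt_4 :
    algr KleinBottleGroup ≤ 1 ∧ algRank KleinBottleGroup = 2 ∧
      algr KleinBottleGroup < algRank KleinBottleGroup := by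
  have hr : algr KleinBottleGroup ≤ 1 :=
    (algr_congr KleinBottleGroup.mulEquivModel).trans_le KleinBottleGroup.Model.algr_le_one
  have hrank : algRank KleinBottleGroup = 2 :=
    (algRank_congr KleinBottleGroup.mulEquivModel).trans KleinBottleGroup.Model.algRank_eq_two
  exact ⟨hr, hrank, hr.trans_lt (by rw [hrank]; norm_num)⟩
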